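/- Rank distribution normalization: the number of m×n matrices over the field 𝔽_2 having rank r (0 ≤ r ≤ min(m,n)) equals [∏_{i=0}^{r-1} (2^m - 2^i)(2^n - 2^i)] / [∏_{i=0}^{r-1} (2^r - 2^i)]. -/

import Mathlib

open Matrix Finset

section Aux

variable {𝔽 : Type*} [Field 𝔽] [Fintype 𝔽] [DecidableEq 𝔽]

omit [Fintype 𝔽] [DecidableEq 𝔽] in
theorem inj_of_rank {m r : ℕ} (B : Matrix (Fin m) (Fin r) 𝔽) (h : B.rank = r) :
    Function.Injective B.mulVecLin := by
  rw [← LinearMap.ker_eq_bot]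
  have h1 := B.mulVecLin.finrank_range_add_finrank_ker
  rw [Matrix.rank] at h
  rw [h] at h1
  simp only [Module.finrank_pi, Fintype.card_fin] at h1
  exact Submodule.finrank_eq_zero.mp (by omega)

omit [Fintype 𝔽] [DecidableEq 𝔽] in
theorem surj_of_rank {r n : ℕ} (C : Matrix (Fin r) (Fin n) 𝔽) (h : C.rank = r) :
    Function.Surjective C.mulVecLin := by
  rw [← LinearMap.range_eq_top]
  apply Submodule.eq_top_of_finrank_eq
  rw [Matrix.rank] at h
  simp [h, Module.finrank_pi]

omit [Fintype 𝔽] [DecidableEq 𝔽] in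
theorem rank_of_inj {m r : ℕ} (B : Matrix (Fin m) (Fin r) 𝔽)
    (h : Function.Injective B.mulVecLin) : B.rank = r := by
  rw [← LinearMap.ker_eq_bot] at h
  have h1 := B.mulVecLin.finrank_range_add_finrank_ker
  rw [h] at h1
  simpa [Matrix.rank, Module.finrank_pi] using h1

omit [Fintype 𝔽] [DecidableEq 𝔽] in
theorem rank_of_surj {r n : ℕ} (C : Matrix (Fin r) (Fin n) 𝔽)
    (h : Function.Surjective C.mulVecLin) : C.rank = r := by
  rw [← LinearMap.range_eq_top] at h
  rw [Matrix.rank, h]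
  simp [Module.finrank_pi]

omit [Fintype 𝔽] [DecidableEq 𝔽] in
theorem rank_mul_full {m r n : ℕ} (B : Matrix (Fin m) (Fin r) 𝔽) (C : Matrix (Fin r) (Fin n) 𝔽)
    (hB : B.rank = r) (hC : C.rank = r) : (B * C).rank = r := by
  rw [Matrix.rank, Matrix.mulVecLin_mul,
    LinearMap.range_comp_of_range_eq_top _ (LinearMap.range_eq_top.mpr (surj_of_rank C hC))]
  exact hB

/-- existence of full-rank factorization -/
theorem exists_factorization {m n r : ℕ} (A : Matrix (Fin m) (Fin n) 𝔽) (hA : A.rank = r) :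
    ∃ (B : Matrix (Fin m) (Fin r) 𝔽) (C : Matrix (Fin r) (Fin n) 𝔽),
      B.rank = r ∧ C.rank = r ∧ B * C = A := by
  set W := LinearMap.range A.mulVecLin with hW
  have hfin : Module.finrank 𝔽 W = r := hA
  let b : Module.Basis (Fin r) 𝔽 W := Module.finBasisOfFinrankEq 𝔽 W hfin
  let e : W ≃ₗ[𝔽] (Fin r → 𝔽) := b.equivFun
  let fB : (Fin r → 𝔽) →ₗ[𝔽] (Fin m → 𝔽) := W.subtype ∘ₗ (e.symm : (Fin r → 𝔽) →ₗ[𝔽] W)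
  let fC : (Fin n → 𝔽) →ₗ[𝔽] (Fin r → 𝔽) := (e : W →ₗ[𝔽] (Fin r → 𝔽)) ∘ₗ A.mulVecLin.rangeRestrict
  refine ⟨LinearMap.toMatrix' fB, LinearMap.toMatrix' fC, ?_, ?_, ?_⟩
  · apply rank_of_inj
    rw [show (LinearMap.toMatrix' fB).mulVecLin = fB from Matrix.toLin'_toMatrix' fB]
    exact W.injective_subtype.comp e.symm.injective
  · apply rank_of_surj
    rw [show (LinearMap.toMatrix' fC).mulVecLin = fC from Matrix.toLin'_toMatrix' fC]
    exact e.surjective.comp A.mulVecLin.surjective_rangeRestrict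
  · rw [← LinearMap.toMatrix'_comp]
    have : fB ∘ₗ fC = A.mulVecLin := by
      apply LinearMap.ext
      intro v
      simp [fB, fC]
    rw [this]
    exact LinearMap.toMatrix'_toLin' A

omit [Fintype 𝔽] in
theorem mul_left_cancel_rank {m r k : ℕ} (B : Matrix (Fin m) (Fin r) 𝔽)
    (hB : Function.Injective B.mulVecLin) {X Y : Matrix (Fin r) (Fin k) 𝔽}
    (h : B * X = B * Y) : X = Y := by
  have hXY : X.mulVecLin = Y.mulVecLin := by
    apply LinearMap.ext
    intro v
    apply hB
    have := congrArg Matrix.mulVecLin h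
    rw [Matrix.mulVecLin_mul, Matrix.mulVecLin_mul] at this
    exact congrFun (congrArg (fun f => (DFunLike.coe f)) this) v
  apply Matrix.toLin'.injective
  rw [Matrix.toLin'_apply', Matrix.toLin'_apply', hXY]

theorem unit_mvl_inj {r : ℕ} (g : GL (Fin r) 𝔽) :
    Function.Injective ((g : Matrix (Fin r) (Fin r) 𝔽)).mulVecLin := by
  intro x y hxy
  have := congrArg (((g⁻¹ : GL (Fin r) 𝔽) : Matrix (Fin r) (Fin r) 𝔽)).mulVecLin hxy
  rw [Matrix.mulVecLin_apply, Matrix.mulVecLin_apply, Matrix.mulVecLin_apply,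
    Matrix.mulVecLin_apply, Matrix.mulVec_mulVec, Matrix.mulVec_mulVec, g.inv_mul,
    Matrix.one_mulVec, Matrix.one_mulVec] at this
  exact this

theorem unit_mvl_surj {r : ℕ} (g : GL (Fin r) 𝔽) :
    Function.Surjective ((g : Matrix (Fin r) (Fin r) 𝔽)).mulVecLin := by
  intro y
  refine ⟨((g⁻¹ : GL (Fin r) 𝔽) : Matrix (Fin r) (Fin r) 𝔽).mulVecLin y, ?_⟩
  rw [Matrix.mulVecLin_apply, Matrix.mulVecLin_apply, Matrix.mulVec_mulVec, g.mul_inv,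
    Matrix.one_mulVec]

theorem card_fiber {m n r : ℕ} (A : Matrix (Fin m) (Fin n) 𝔽) (hA : A.rank = r) :
    Nat.card {p : Matrix (Fin m) (Fin r) 𝔽 × Matrix (Fin r) (Fin n) 𝔽 //
      p.1.rank = r ∧ p.2.rank = r ∧ p.1 * p.2 = A} = Nat.card (GL (Fin r) 𝔽) := by
  obtain ⟨B₀, C₀, hB₀, hC₀, hBC₀⟩ := exists_factorization A hA
  have hB₀i : Function.Injective B₀.mulVecLin := inj_of_rank B₀ hB₀
  set T := {p : Matrix (Fin m) (Fin r) 𝔽 × Matrix (Fin r) (Fin n) 𝔽 //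
      p.1.rank = r ∧ p.2.rank = r ∧ p.1 * p.2 = A} with hT
  let f : GL (Fin r) 𝔽 → T := fun g => ⟨(B₀ * (g : Matrix (Fin r) (Fin r) 𝔽),
      ((g⁻¹ : GL (Fin r) 𝔽) : Matrix (Fin r) (Fin r) 𝔽) * C₀), by
    constructor
    · apply rank_of_inj
      rw [Matrix.mulVecLin_mul]
      exact hB₀i.comp (unit_mvl_inj g)
    constructor
    · apply rank_of_surj
      rw [Matrix.mulVecLin_mul]
      exact (unit_mvl_surj g⁻¹).comp (surj_of_rank C₀ hC₀)
    · show B₀ * (g : Matrix (Fin r) (Fin r) 𝔽) *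
        (((g⁻¹ : GL (Fin r) 𝔽) : Matrix (Fin r) (Fin r) 𝔽) * C₀) = A
      rw [Matrix.mul_assoc, ← Matrix.mul_assoc (g : Matrix (Fin r) (Fin r) 𝔽),
        show (g : Matrix (Fin r) (Fin r) 𝔽) * (g⁻¹ : GL (Fin r) 𝔽) = 1 from g.mul_inv,
        Matrix.one_mul, hBC₀]⟩
  have hfbij : Function.Bijective f := by
    constructor
    · intro g g' hgg'
      have h1 : B₀ * (g : Matrix (Fin r) (Fin r) 𝔽) = B₀ * (g' : Matrix (Fin r) (Fin r) 𝔽) :=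
        congrArg (fun p : T => p.1.1) hgg'
      exact Units.ext (mul_left_cancel_rank B₀ hB₀i h1)
    · rintro ⟨⟨B, C⟩, hB, hC, hBC⟩
      have hBi : Function.Injective B.mulVecLin := inj_of_rank B hB
      have hCs : Function.Surjective C.mulVecLin := surj_of_rank C hC
      have hrange : LinearMap.range B.mulVecLin = LinearMap.range B₀.mulVecLin := by
        have e1 : LinearMap.range (B * C).mulVecLin = LinearMap.range B.mulVecLin := by
          rw [Matrix.mulVecLin_mul,
            LinearMap.range_comp_of_range_eq_top _ (LinearMap.range_eq_top.mpr hCs)]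
        have e2 : LinearMap.range (B₀ * C₀).mulVecLin = LinearMap.range B₀.mulVecLin := by
          rw [Matrix.mulVecLin_mul, LinearMap.range_comp_of_range_eq_top _
            (LinearMap.range_eq_top.mpr (surj_of_rank C₀ hC₀))]
        rw [← e1, ← e2, hBC, hBC₀]
      let eB := LinearEquiv.ofInjective B.mulVecLin hBi
      let eB₀ := LinearEquiv.ofInjective B₀.mulVecLin hB₀i
      let h : (Fin r → 𝔽) ≃ₗ[𝔽] (Fin r → 𝔽) :=
        eB ≪≫ₗ LinearEquiv.ofEq _ _ hrange ≪≫ₗ eB₀.symm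
      have hcomp : B₀.mulVecLin ∘ₗ (h : (Fin r → 𝔽) →ₗ[𝔽] (Fin r → 𝔽)) = B.mulVecLin := by
        apply LinearMap.ext
        intro v
        have hv : eB₀ (h v) = LinearEquiv.ofEq _ _ hrange (eB v) := by
          simp [h, eB₀]
        have := congrArg (Subtype.val) hv
        rw [LinearEquiv.ofInjective_apply] at this
        simpa [eB, LinearEquiv.ofInjective_apply] using this
      let gm := LinearMap.toMatrix' (h : (Fin r → 𝔽) →ₗ[𝔽] (Fin r → 𝔽))
      let gm' := LinearMap.toMatrix' (h.symm : (Fin r → 𝔽) →ₗ[𝔽] (Fin r → 𝔽))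
      have hmul1 : gm * gm' = 1 := by
        rw [← LinearMap.toMatrix'_comp]
        rw [show (h : (Fin r → 𝔽) →ₗ[𝔽] (Fin r → 𝔽)) ∘ₗ (h.symm : (Fin r → 𝔽) →ₗ[𝔽] (Fin r → 𝔽))
          = LinearMap.id from by apply LinearMap.ext; simp]
        exact LinearMap.toMatrix'_id
      have hmul2 : gm' * gm = 1 := by
        rw [← LinearMap.toMatrix'_comp]
        rw [show (h.symm : (Fin r → 𝔽) →ₗ[𝔽] (Fin r → 𝔽)) ∘ₗ (h : (Fin r → 𝔽) →ₗ[𝔽] (Fin r → 𝔽))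
          = LinearMap.id from by apply LinearMap.ext; simp]
        exact LinearMap.toMatrix'_id
      have hkey : B₀ * gm = B := by
        apply Matrix.toLin'.injective
        rw [Matrix.toLin'_apply', Matrix.toLin'_apply', Matrix.mulVecLin_mul]
        rw [show gm.mulVecLin = (h : (Fin r → 𝔽) →ₗ[𝔽] (Fin r → 𝔽)) from
          Matrix.toLin'_toMatrix' _]
        exact hcomp
      have hC' : gm' * C₀ = C := by
        have h1 : B₀ * (gm * C) = B₀ * C₀ := by
          rw [← Matrix.mul_assoc, hkey, hBC, ← hBC₀]
        have h2 : gm * C = C₀ := mul_left_cancel_rank B₀ hB₀i h1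
        rw [← h2, ← Matrix.mul_assoc, hmul2, Matrix.one_mul]
      refine ⟨⟨gm, gm', hmul1, hmul2⟩, ?_⟩
      apply Subtype.ext
      show (B₀ * gm, gm' * C₀) = (B, C)
      rw [hkey, hC']
  symm
  exact Nat.card_congr (Equiv.ofBijective f hfbij)

theorem rank_eq_iff_li_cols {m r : ℕ} (B : Matrix (Fin m) (Fin r) 𝔽) :
    B.rank = r ↔ LinearIndependent 𝔽 Bᵀ := by
  change _ ↔ LinearIndependent 𝔽 B.col
  rw [Matrix.rank_eq_finrank_span_cols, linearIndependent_iff_card_eq_finrank_span]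
  rw [Set.finrank, Fintype.card_fin]
  exact eq_comm

theorem rank_eq_iff_li_rows {r n : ℕ} (C : Matrix (Fin r) (Fin n) 𝔽) :
    C.rank = r ↔ LinearIndependent 𝔽 C := by
  change _ ↔ LinearIndependent 𝔽 C.row
  rw [Matrix.rank_eq_finrank_span_row, linearIndependent_iff_card_eq_finrank_span]
  rw [Set.finrank, Fintype.card_fin]
  exact eq_comm

theorem card_rank_col {m r : ℕ} (hrm : r ≤ m) :
    Nat.card {B : Matrix (Fin m) (Fin r) 𝔽 // B.rank = r} =
      ∏ i : Fin r, (Fintype.card 𝔽 ^ m - Fintype.card 𝔽 ^ (i : ℕ)) := by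
  have hk : r ≤ Module.finrank 𝔽 (Fin m → 𝔽) := by
    simpa [Module.finrank_pi] using hrm
  have := card_linearIndependent (K := 𝔽) (V := Fin m → 𝔽) hk
  rw [Module.finrank_pi, Fintype.card_fin] at this
  rw [← this]
  apply Nat.card_congr
  refine Equiv.subtypeEquiv ⟨fun B => Bᵀ, fun s => (Matrix.of s)ᵀ,
    fun B => Matrix.transpose_transpose B, fun s => rfl⟩ ?_
  intro B
  exact rank_eq_iff_li_cols B

theorem card_rank_row {r n : ℕ} (hrn : r ≤ n) :
    Nat.card {C : Matrix (Fin r) (Fin n) 𝔽 // C.rank = r} =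
      ∏ i : Fin r, (Fintype.card 𝔽 ^ n - Fintype.card 𝔽 ^ (i : ℕ)) := by
  have hk : r ≤ Module.finrank 𝔽 (Fin n → 𝔽) := by
    simpa [Module.finrank_pi] using hrn
  have := card_linearIndependent (K := 𝔽) (V := Fin n → 𝔽) hk
  rw [Module.finrank_pi, Fintype.card_fin] at this
  rw [← this]
  apply Nat.card_congr
  exact Equiv.subtypeEquiv (Equiv.refl _) (fun C => rank_eq_iff_li_rows C)

theorem main_count {m n r : ℕ} (hrm : r ≤ m) (hrn : r ≤ n) :
    ((Finset.univ.filter (fun A : Matrix (Fin m) (Fin n) 𝔽 => A.rank = r)).card)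
      * Nat.card (GL (Fin r) 𝔽)
    = (∏ i : Fin r, (Fintype.card 𝔽 ^ m - Fintype.card 𝔽 ^ (i : ℕ)))
      * ∏ i : Fin r, (Fintype.card 𝔽 ^ n - Fintype.card 𝔽 ^ (i : ℕ)) := by
  classical
  set P := Finset.univ.filter
    (fun p : Matrix (Fin m) (Fin r) 𝔽 × Matrix (Fin r) (Fin n) 𝔽 =>
      p.1.rank = r ∧ p.2.rank = r) with hPdef
  have hPcard : P.card = (∏ i : Fin r, (Fintype.card 𝔽 ^ m - Fintype.card 𝔽 ^ (i : ℕ)))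
      * ∏ i : Fin r, (Fintype.card 𝔽 ^ n - Fintype.card 𝔽 ^ (i : ℕ)) := by
    rw [hPdef, ← Fintype.card_subtype, ← Nat.card_eq_fintype_card]
    rw [Nat.card_congr (Equiv.subtypeProdEquivProd
      (p := fun B : Matrix (Fin m) (Fin r) 𝔽 => B.rank = r)
      (q := fun C : Matrix (Fin r) (Fin n) 𝔽 => C.rank = r)), Nat.card_prod]
    rw [card_rank_col (𝔽 := 𝔽) hrm, card_rank_row (𝔽 := 𝔽) hrn]
  have hmaps : ∀ p ∈ P, p.1 * p.2 ∈
      Finset.univ.filter (fun A : Matrix (Fin m) (Fin n) 𝔽 => A.rank = r) := by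
    intro p hp
    simp only [hPdef, Finset.mem_filter, Finset.mem_univ, true_and] at hp ⊢
    exact rank_mul_full p.1 p.2 hp.1 hp.2
  rw [← hPcard, Finset.card_eq_sum_card_fiberwise hmaps]
  rw [Finset.sum_congr rfl (fun A hA => ?_), Finset.sum_const, smul_eq_mul]
  have hA : A.rank = r := by simpa using hA
  have : P.filter (fun p => p.1 * p.2 = A) = Finset.univ.filter
      (fun p : Matrix (Fin m) (Fin r) 𝔽 × Matrix (Fin r) (Fin n) 𝔽 =>
        p.1.rank = r ∧ p.2.rank = r ∧ p.1 * p.2 = A) := by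
    rw [hPdef, Finset.filter_filter]
    apply Finset.filter_congr
    intro p _
    simp [and_assoc]
  rw [this, ← Fintype.card_subtype, ← Nat.card_eq_fintype_card]
  exact card_fiber A hA

end Aux

theorem rank_count_matrices_F2 (m n r : ℕ) (hm : 0 < m) (hn : 0 < n)
    (hr : r ≤ min m n) :
    ((Finset.univ.filter
        (fun A : Matrix (Fin m) (Fin n) (ZMod 2) => A.rank = r)).card : ℚ)
      = (∏ i ∈ Finset.range r, ((2:ℚ) ^ m - 2 ^ i) * ((2:ℚ) ^ n - 2 ^ i)) /
          ∏ i ∈ Finset.range r, ((2:ℚ) ^ r - 2 ^ i) := by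
  have hrm : r ≤ m := le_trans hr (min_le_left m n)
  have hrn : r ≤ n := le_trans hr (min_le_right m n)
  have key := main_count (𝔽 := ZMod 2) hrm hrn
  rw [Matrix.card_GL_field] at key
  rw [ZMod.card 2] at key
  have hcast : ∀ k : ℕ, r ≤ k →
      ((∏ i : Fin r, (2 ^ k - 2 ^ (i : ℕ)) : ℕ) : ℚ)
        = ∏ i ∈ Finset.range r, ((2:ℚ) ^ k - 2 ^ i) := by
    intro k hk
    rw [Nat.cast_prod, Fin.prod_univ_eq_prod_range (fun j => (((2:ℕ) ^ k - 2 ^ j : ℕ) : ℚ)) r]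
    apply Finset.prod_congr rfl
    intro i hi
    have hi' : i < r := Finset.mem_range.mp hi
    have h2 : (2:ℕ) ^ i ≤ 2 ^ k := Nat.pow_le_pow_right (by norm_num) (by omega)
    push_cast [Nat.cast_sub h2]
    ring
  have keyQ : ((Finset.univ.filter
        (fun A : Matrix (Fin m) (Fin n) (ZMod 2) => A.rank = r)).card : ℚ)
      * ∏ i ∈ Finset.range r, ((2:ℚ) ^ r - 2 ^ i)
      = (∏ i ∈ Finset.range r, ((2:ℚ) ^ m - 2 ^ i))
        * ∏ i ∈ Finset.range r, ((2:ℚ) ^ n - 2 ^ i) := by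
    have := congrArg (fun x : ℕ => (x : ℚ)) key
    simp only [Nat.cast_mul] at this
    rw [hcast m hrm, hcast n hrn, hcast r le_rfl] at this
    exact this
  have hne : (∏ i ∈ Finset.range r, ((2:ℚ) ^ r - 2 ^ i)) ≠ 0 := by
    apply Finset.prod_ne_zero_iff.mpr
    intro i hi
    have hi' : i < r := Finset.mem_range.mp hi
    have : (2:ℚ) ^ i < 2 ^ r := by
      apply pow_lt_pow_right₀ (by norm_num) hi'
    exact sub_ne_zero_of_ne (ne_of_gt this)
  rw [eq_div_iff hne, ← Finset.prod_mul_distrib] at *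
  rw [keyQ, Finset.prod_mul_distrib]
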